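/- Let G be a finite group, a ∈ G \ Z(G), and suppose nacent(G) = {G, C(a)}. Then the collection Π = {C(a)/Z(G)} ∪ {C(x)/Z(G) : x ∈ G \ C(a)} is a non-trivial normal partition of G/Z(G): every member of Π is a non-trivial proper subgroup of G/Z(G), every non-identity element of G/Z(G) lies in exactly one member of Π, Π has more than one member, and Π is closed under conjugation by elements of G/Z(G). -/

import Mathlib

open Subgroup

/-- `Cent(G)`: the set of element centralizers of `G`. -/
def elemCentralizers (G : Type*) [Group G] : Set (Subgroup G) :=
  {H | ∃ x : G, H = Subgroup.centralizer {x}}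

/-- `nacent(G)`: the set of non-abelian element centralizers of `G`. -/
def nacent (G : Type*) [Group G] : Set (Subgroup G) :=
  {H | H ∈ elemCentralizers G ∧ ¬ IsMulCommutative H}

/-- A group is a CA-group if the centralizer of every non-central element is abelian. -/
def IsCAGroup (H : Type*) [Group H] : Prop :=
  ∀ h : H, h ∉ Subgroup.center H → IsMulCommutative (Subgroup.centralizer {h} : Subgroup H)

/-- The Hughes subgroup `H_p(K)`, generated by the elements of order `≠ p`. -/
def hughesSubgroup (p : ℕ) (K : Type*) [Group K] : Subgroup K :=
  Subgroup.closure {x : K | orderOf x ≠ p}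

/-- The conjugate `g H g⁻¹` of a subgroup. -/
def conjSubgroup {F : Type*} [Group F] (g : F) (H : Subgroup F) : Subgroup F :=
  H.map (MulAut.conj g).toMonoidHom

/-- `F` is a Frobenius group with kernel `N` and complement `H`. -/
def IsFrobeniusWithKernel {F : Type*} [Group F] (N H : Subgroup F) : Prop :=
  N.Normal ∧ N ⊓ H = ⊥ ∧ N ⊔ H = ⊤ ∧ N ≠ ⊥ ∧ H ≠ ⊥ ∧
    ∀ g : F, g ∉ H → H ⊓ conjSubgroup g H = ⊥

/-- `F` is a Frobenius group with complement `H`. -/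
def IsFrobeniusWithComplement {F : Type*} [Group F] (H : Subgroup F) : Prop :=
  H ≠ ⊥ ∧ H ≠ ⊤ ∧ ∀ g : F, g ∉ H → H ⊓ conjSubgroup g H = ⊥

/-!
If `x ∉ C(a)`, then `C(x)` and the centralizer of every non-central `y ∈ C(x)` are abelian,
since a non-abelian one would be `G` or `C(a)`; two commuting elements with abelian centralizers
have the same centralizer, so `C(y) = C(x)`, and `y ∉ C(a)` because `a ∉ C(x)`. Thus the
non-central elements split into `C(a) \ Z(G)` and the sets `C(x) \ Z(G)` with `x ∉ C(a)`.
Conjugation maps `C(a)` to a non-abelian element centralizer other than `G`, so `C(a)` is normal,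
and conjugation permutes the remaining members.
-/

namespace Subgroup

variable {G : Type*} [Group G]

theorem mem_centralizer_singleton_comm {x y : G} :
    x ∈ centralizer {y} ↔ y ∈ centralizer {x} := by
  simp only [mem_centralizer_singleton_iff, eq_comm]

theorem mem_centralizer_singleton_self (x : G) : x ∈ centralizer {x} :=
  mem_centralizer_singleton_iff.2 rfl

theorem centralizer_singleton_eq_top_iff {x : G} : centralizer {x} = ⊤ ↔ x ∈ center G := by
  rw [centralizer_eq_top_iff_subset, Set.singleton_subset_iff, SetLike.mem_coe]

theorem centralizer_le_centralizer_of_mem {x y : G} [IsMulCommutative (centralizer {x})]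
    (hy : y ∈ centralizer {x}) : centralizer {x} ≤ centralizer {y} :=
  (le_centralizer _).trans (centralizer_le (Set.singleton_subset_iff.2 hy))

theorem map_conj_centralizer_singleton (g x : G) :
    (centralizer {x}).map (MulAut.conj g) = centralizer {g * x * g⁻¹} := by
  ext y
  rw [map_equiv_eq_comap_symm, mem_comap, mem_centralizer_singleton_iff,
    mem_centralizer_singleton_iff]
  rw [← (MulAut.conj g⁻¹).injective.eq_iff (a := y * (g * x * g⁻¹))]
  simp [mul_assoc]

theorem isMulCommutative_centralizer_conj {g x : G}
    [IsMulCommutative (centralizer {g * x * g⁻¹})] : IsMulCommutative (centralizer {x}) := by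
  have key := map_conj_centralizer_singleton g⁻¹ (g * x * g⁻¹)
  rw [show g⁻¹ * (g * x * g⁻¹) * g⁻¹⁻¹ = x by group] at key
  exact key ▸ map_isMulCommutative _ _

section Quotient

variable {N H : Subgroup G} [N.Normal]

theorem mk'_mem_map_mk'_iff (hN : N ≤ H) {y : G} :
    QuotientGroup.mk' N y ∈ H.map (QuotientGroup.mk' N) ↔ y ∈ H := by
  rw [← mem_comap, comap_map_eq, QuotientGroup.ker_mk', sup_of_le_left hN]

theorem map_mk'_injective_of_le {K : Subgroup G} (hH : N ≤ H) (hK : N ≤ K)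
    (h : H.map (QuotientGroup.mk' N) = K.map (QuotientGroup.mk' N)) : H = K :=
  map_injective_of_ker_le _ ((QuotientGroup.ker_mk' N).trans_le hH)
    ((QuotientGroup.ker_mk' N).trans_le hK) h

theorem map_mk'_eq_top_iff (hN : N ≤ H) : H.map (QuotientGroup.mk' N) = ⊤ ↔ H = ⊤ := by
  rw [← map_top_of_surjective _ (QuotientGroup.mk'_surjective N)]
  exact ⟨map_mk'_injective_of_le hN le_top, fun h => h ▸ rfl⟩

theorem conjSubgroup_map_mk' (g : G) (H : Subgroup G) :
    conjSubgroup (QuotientGroup.mk' N g) (H.map (QuotientGroup.mk' N)) =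
      (H.map (MulAut.conj g)).map (QuotientGroup.mk' N) := by
  simp only [conjSubgroup, map_map]
  congr 1

end Quotient

theorem centralizer_map_mk'_ne_bot_and_ne_top {x : G} (hx : x ∉ center G) :
    (centralizer {x}).map (QuotientGroup.mk' (center G)) ≠ ⊥ ∧
      (centralizer {x}).map (QuotientGroup.mk' (center G)) ≠ ⊤ := by
  rw [Ne, Ne, map_eq_bot_iff, QuotientGroup.ker_mk', map_mk'_eq_top_iff (center_le_centralizer _),
    centralizer_singleton_eq_top_iff]
  exact ⟨fun h => hx (h (mem_centralizer_singleton_self _)), hx⟩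

end Subgroup

section NacentPair

variable {G : Type*} [Group G] {a x y : G}

theorem centralizer_eq_top_or_eq_of_nacent_eq (hna : nacent G = {⊤, centralizer {a}})
    (hx : ¬ IsMulCommutative (centralizer {x})) :
    centralizer {x} = ⊤ ∨ centralizer {x} = centralizer {a} := by
  have hmem : centralizer {x} ∈ nacent G := ⟨⟨x, rfl⟩, hx⟩
  rwa [hna] at hmem

theorem not_isMulCommutative_centralizer_of_nacent_eq (hna : nacent G = {⊤, centralizer {a}}) :
    ¬ IsMulCommutative (centralizer {a}) := by
  have hmem : centralizer {a} ∈ nacent G := hna ▸ Set.mem_insert_of_mem _ rfl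
  exact hmem.2

theorem isMulCommutative_centralizer_of_nacent_eq (hna : nacent G = {⊤, centralizer {a}})
    (hx : x ∉ centralizer {a}) (hxy : x ∈ centralizer {y}) (hy : y ∉ center G) :
    IsMulCommutative (centralizer {y}) := by
  by_contra hcomm
  rcases centralizer_eq_top_or_eq_of_nacent_eq hna hcomm with h | h
  · exact hy (centralizer_singleton_eq_top_iff.1 h)
  · exact hx (h ▸ hxy)

theorem centralizer_eq_of_nacent_eq (hna : nacent G = {⊤, centralizer {a}})
    (hx : x ∉ centralizer {a}) (hy : y ∈ centralizer {x}) (hyZ : y ∉ center G) :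
    centralizer {y} = centralizer {x} := by
  have hxy : x ∈ centralizer {y} := mem_centralizer_singleton_comm.1 hy
  have hxZ : x ∉ center G := fun h => hx (center_le_centralizer _ h)
  have := isMulCommutative_centralizer_of_nacent_eq hna hx hxy hyZ
  have := isMulCommutative_centralizer_of_nacent_eq hna hx (mem_centralizer_singleton_self _) hxZ
  exact le_antisymm (centralizer_le_centralizer_of_mem hxy) (centralizer_le_centralizer_of_mem hy)

theorem centralizer_normal_of_nacent_eq (hna : nacent G = {⊤, centralizer {a}}) :
    (centralizer {a}).Normal := by
  by_cases ha : a ∈ center G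
  · rw [centralizer_singleton_eq_top_iff.2 ha]
    infer_instance
  refine normal_iff_map_conj_eq.2 fun g => ?_
  have hcomm : ¬ IsMulCommutative (centralizer {g * a * g⁻¹}) := fun _ =>
    not_isMulCommutative_centralizer_of_nacent_eq hna (isMulCommutative_centralizer_conj (g := g))
  have hZ : g * a * g⁻¹ ∉ center G := fun h =>
    ha (by simpa [mul_assoc] using (center G).normal_of_characteristic.conj_mem _ h g⁻¹)
  rw [map_conj_centralizer_singleton]
  exact (centralizer_eq_top_or_eq_of_nacent_eq hna hcomm).resolve_left
    (mt centralizer_singleton_eq_top_iff.1 hZ)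

end NacentPair

section CentralizerPartition

variable {G : Type*} [Group G] {a : G}

def centralizerPartition (a : G) : Set (Subgroup (G ⧸ center G)) :=
  insert ((centralizer {a}).map (QuotientGroup.mk' (center G)))
    {H | ∃ x : G, x ∉ centralizer {a} ∧
      H = (centralizer {x}).map (QuotientGroup.mk' (center G))}

theorem ne_bot_and_ne_top_of_mem_centralizerPartition (ha : a ∉ center G)
    {H : Subgroup (G ⧸ center G)} (hH : H ∈ centralizerPartition a) :
    H ≠ ⊥ ∧ H ≠ ⊤ := by
  rcases hH with rfl | ⟨x, hx, rfl⟩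
  · exact centralizer_map_mk'_ne_bot_and_ne_top ha
  · exact centralizer_map_mk'_ne_bot_and_ne_top fun hZ => hx (center_le_centralizer _ hZ)

theorem existsUnique_mem_centralizerPartition (hna : nacent G = {⊤, centralizer {a}})
    {g : G ⧸ center G} (hg : g ≠ 1) : ∃! H, H ∈ centralizerPartition a ∧ g ∈ H := by
  obtain ⟨y, rfl⟩ := QuotientGroup.mk'_surjective (center G) g
  have hy : y ∉ center G := fun h => hg ((QuotientGroup.eq_one_iff y).2 h)
  have mem_iff (x : G) := mk'_mem_map_mk'_iff (y := y) (center_le_centralizer {x})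
  by_cases hya : y ∈ centralizer {a}
  · refine ⟨_, ⟨Set.mem_insert _ _, (mem_iff a).2 hya⟩, ?_⟩
    rintro K ⟨rfl | ⟨x, hx, rfl⟩, hyK⟩
    · rfl
    · have hC := centralizer_eq_of_nacent_eq hna hx ((mem_iff x).1 hyK) hy
      exact absurd (hC ▸ mem_centralizer_singleton_comm.1 hya)
        (mem_centralizer_singleton_comm.not.1 hx)
  · refine ⟨_, ⟨Set.mem_insert_of_mem _ ⟨y, hya, rfl⟩,
      (mem_iff y).2 (mem_centralizer_singleton_self y)⟩, ?_⟩
    rintro K ⟨rfl | ⟨x, hx, rfl⟩, hyK⟩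
    · exact absurd ((mem_iff a).1 hyK) hya
    · rw [centralizer_eq_of_nacent_eq hna hx ((mem_iff x).1 hyK) hy]

theorem centralizerPartition_nontrivial (ha : a ∉ center G) :
    (centralizerPartition a).Nontrivial := by
  obtain ⟨x, hx⟩ : ∃ x, x ∉ centralizer {a} := by
    by_contra! h
    exact ha (centralizer_singleton_eq_top_iff.1 (eq_top_iff' _ |>.2 h))
  refine ⟨_, Set.mem_insert _ _, _, Set.mem_insert_of_mem _ ⟨x, hx, rfl⟩, fun h => ?_⟩
  have hC := map_mk'_injective_of_le (center_le_centralizer _) (center_le_centralizer _) h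
  exact hx (hC ▸ mem_centralizer_singleton_self _)

theorem conjSubgroup_mem_centralizerPartition (hna : nacent G = {⊤, centralizer {a}})
    {H : Subgroup (G ⧸ center G)} (hH : H ∈ centralizerPartition a) (g : G ⧸ center G) :
    conjSubgroup g H ∈ centralizerPartition a := by
  have := centralizer_normal_of_nacent_eq hna
  obtain ⟨g, rfl⟩ := QuotientGroup.mk'_surjective (center G) g
  rcases hH with rfl | ⟨x, hx, rfl⟩
  · rw [conjSubgroup_map_mk', Normal.map_conj_eq]
    exact Set.mem_insert _ _
  · rw [conjSubgroup_map_mk', map_conj_centralizer_singleton]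
    refine Set.mem_insert_of_mem _ ⟨g * x * g⁻¹, fun h => hx ?_, rfl⟩
    simpa [mul_assoc] using this.conj_mem _ h g⁻¹

end CentralizerPartition

theorem stmt_4_general {G : Type*} [Group G] (a : G)
    (ha : a ∉ Subgroup.center G)
    (hna : nacent G = {⊤, Subgroup.centralizer {a}}) :
    ∀ Pi : Set (Subgroup (G ⧸ Subgroup.center G)),
      Pi = insert
          ((Subgroup.centralizer ({a} : Set G)).map (QuotientGroup.mk' (Subgroup.center G)))
          {H | ∃ x : G, x ∉ Subgroup.centralizer ({a} : Set G) ∧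
            H = (Subgroup.centralizer ({x} : Set G)).map (QuotientGroup.mk' (Subgroup.center G))} →
      (∀ H ∈ Pi, H ≠ ⊥ ∧ H ≠ ⊤) ∧
      (∀ g : G ⧸ Subgroup.center G, g ≠ 1 → ∃! H : Subgroup (G ⧸ Subgroup.center G),
        H ∈ Pi ∧ g ∈ H) ∧
      (∃ H ∈ Pi, ∃ K ∈ Pi, H ≠ K) ∧
      (∀ H ∈ Pi, ∀ g : G ⧸ Subgroup.center G, conjSubgroup g H ∈ Pi) := by
  rintro Pi rfl
  exact ⟨fun _ => ne_bot_and_ne_top_of_mem_centralizerPartition ha,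
    fun _ => existsUnique_mem_centralizerPartition hna,
    centralizerPartition_nontrivial ha,
    fun _ => conjSubgroup_mem_centralizerPartition hna⟩

theorem stmt_4 {G : Type*} [Group G] [Finite G] (a : G)
    (ha : a ∉ Subgroup.center G)
    (hna : nacent G = {⊤, Subgroup.centralizer {a}})
    (hpr : Subgroup.centralizer {a} ≠ (⊤ : Subgroup G)) :
    ∀ Pi : Set (Subgroup (G ⧸ Subgroup.center G)),
      Pi = insert
          ((Subgroup.centralizer ({a} : Set G)).map (QuotientGroup.mk' (Subgroup.center G)))
          {H | ∃ x : G, x ∉ Subgroup.centralizer ({a} : Set G) ∧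
            H = (Subgroup.centralizer ({x} : Set G)).map (QuotientGroup.mk' (Subgroup.center G))} →
      (∀ H ∈ Pi, H ≠ ⊥ ∧ H ≠ ⊤) ∧
      (∀ g : G ⧸ Subgroup.center G, g ≠ 1 → ∃! H : Subgroup (G ⧸ Subgroup.center G),
        H ∈ Pi ∧ g ∈ H) ∧
      (∃ H ∈ Pi, ∃ K ∈ Pi, H ≠ K) ∧
      (∀ H ∈ Pi, ∀ g : G ⧸ Subgroup.center G, conjSubgroup g H ∈ Pi) :=
  stmt_4_general a ha hna
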